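/- Let ψ₁,…,ψ_r be LTL formulas and let φ = G(ψ₁ ∨ G(ψ₂ ∨ (⋯ ∨ Gψ_r)⋯)). If a nonempty finite word u satisfies φ, then there exist indices i₁ < i₂ < ⋯ < i_k with k ≤ |u| + 1 such that u satisfies ψ = G(ψ_{i₁} ∨ G(ψ_{i₂} ∨ (⋯ ∨ Gψ_{i_k})⋯)), and moreover every nonempty finite word satisfying ψ also satisfies φ. -/

import Mathlib

/-- Syntax of LTL (in negation normal form: negation only on atomic formulas). -/
inductive LTL (σ : Type) : Type
  | top   : LTL σ
  | bot   : LTL σ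
  | atom  : σ → LTL σ
  | natom : σ → LTL σ
  | conj  : LTL σ → LTL σ → LTL σ
  | disj  : LTL σ → LTL σ → LTL σ
  | next  : LTL σ → LTL σ
  | ev    : LTL σ → LTL σ
  | glob  : LTL σ → LTL σ
  | untl  : LTL σ → LTL σ → LTL σ

namespace LTL

variable {σ : Type}

/-- Satisfaction of an LTL formula by a finite word (intended for nonempty words).
`w.drop i` is the suffix of `w` starting at (1-indexed) position `i+1`. -/
def sat : LTL σ → List σ → Prop
  | top, _ => True
  | bot, _ => False
  | atom c, w => w.head? = some c
  | natom c, w => w ≠ [] ∧ w.head? ≠ some c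
  | conj φ ψ, w => sat φ w ∧ sat ψ w
  | disj φ ψ, w => sat φ w ∨ sat ψ w
  | next φ, w => 2 ≤ w.length ∧ sat φ w.tail
  | ev φ, w => ∃ i < w.length, sat φ (w.drop i)
  | glob φ, w => ∀ i < w.length, sat φ (w.drop i)
  | untl φ ψ, w => ∃ i < w.length, sat ψ (w.drop i) ∧ ∀ j < i, sat φ (w.drop j)

/-- Size of a formula: the number of nodes of its syntax tree. -/
def size : LTL σ → ℕ
  | top => 1
  | bot => 1
  | atom _ => 1
  | natom _ => 2
  | conj φ ψ => size φ + size ψ + 1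
  | disj φ ψ => size φ + size ψ + 1
  | next φ => size φ + 1
  | ev φ => size φ + 1
  | glob φ => size φ + 1
  | untl φ ψ => size φ + size ψ + 1

/-- The operators of LTL. -/
inductive Op : Type
  | X | F | G | U | And | Or | Not
  deriving DecidableEq

/-- `φ.usesOnly O`: the formula `φ` is built from atomic formulas (and ⊤, ⊥)
using only operators belonging to the set `O`. -/
def usesOnly : LTL σ → Set Op → Prop
  | top, _ => True
  | bot, _ => True
  | atom _, _ => True
  | natom _, O => Op.Not ∈ O
  | conj φ ψ, O => Op.And ∈ O ∧ usesOnly φ O ∧ usesOnly ψ O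
  | disj φ ψ, O => Op.Or ∈ O ∧ usesOnly φ O ∧ usesOnly ψ O
  | next φ, O => Op.X ∈ O ∧ usesOnly φ O
  | ev φ, O => Op.F ∈ O ∧ usesOnly φ O
  | glob φ, O => Op.G ∈ O ∧ usesOnly φ O
  | untl φ ψ, O => Op.U ∈ O ∧ usesOnly φ O ∧ usesOnly ψ O

/-- `φ.constFree`: the constants ⊤ and ⊥ do not occur in `φ`
(for fragments built from atomic formulas only). -/
def constFree : LTL σ → Prop
  | top => False
  | bot => False
  | atom _ => True
  | natom _ => True
  | conj φ ψ => constFree φ ∧ constFree ψ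
  | disj φ ψ => constFree φ ∧ constFree ψ
  | next φ => constFree φ
  | ev φ => constFree φ
  | glob φ => constFree φ
  | untl φ ψ => constFree φ ∧ constFree ψ

/-- Two formulas are equivalent if exactly the same nonempty finite words satisfy them. -/
def Equiv (φ ψ : LTL σ) : Prop := ∀ w : List σ, w ≠ [] → (sat φ w ↔ sat ψ w)

/-- `φ.Separates P N`: every word of `P` satisfies `φ` and no word of `N` does. -/
def Separates (φ : LTL σ) (P N : Finset (List σ)) : Prop :=
  (∀ u ∈ P, sat φ u) ∧ (∀ v ∈ N, ¬ sat φ v)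

end LTL

/-- The nested formula `G(ψ₁ ∨ G(ψ₂ ∨ (⋯ ∨ Gψ_r)⋯))` built from a list of formulas. -/
def nestG {σ : Type} : List (LTL σ) → LTL σ
  | [] => LTL.bot
  | [ψ] => LTL.glob ψ
  | ψ :: rest => LTL.glob (LTL.disj ψ (nestG rest))


namespace LTL

theorem nestG_suffix {σ : Type} {L : List (LTL σ)} {w : List σ}
    (h : (nestG L).sat w) (i : ℕ) : (nestG L).sat (w.drop i) := by
  match L with
  | [] => exact h.elim
  | [ψ] =>
    intro j hj
    rw [List.drop_drop]
    refine h _ ?_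
    simp at hj ⊢
    omega
  | ψ :: a :: rest =>
    intro j hj
    rw [List.drop_drop]
    refine h _ ?_
    simp at hj ⊢
    omega

theorem nestG_mono {σ : Type} {L L' : List (LTL σ)} (h : L.Sublist L') :
    ∀ w : List σ, (nestG L).sat w → (nestG L').sat w := by
  induction h with
  | slnil => intro w hw; exact hw.elim
  | @cons L L' a h ih =>
    intro w hw
    have hw' := ih w hw
    cases L' with
    | nil => exact hw'.elim
    | cons b L'' =>
      intro i hi
      exact Or.inr (nestG_suffix hw' i)
  | @cons_cons L L' a h ih =>
    intro w hw
    cases L with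
    | nil =>
      cases L' with
      | nil => exact hw
      | cons d L₁ => intro i hi; exact Or.inl (hw i hi)
    | cons c L₀ =>
      cases L' with
      | nil => simp at h
      | cons d L₁ =>
        intro i hi
        rcases hw i hi with h1 | h2
        · exact Or.inl h1
        · exact Or.inr (ih _ h2)

theorem nestG_extract {σ : Type} (ψs : List (LTL σ)) :
    ∀ u : List σ, (nestG ψs).sat u →
      ∃ sub : List (LTL σ), sub.Sublist ψs ∧ sub.length ≤ u.length + 1 ∧
        (nestG sub).sat u := by
  induction ψs with
  | nil => intro u h; exact h.elim
  | cons ψ rest ih =>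
    intro u h
    cases rest with
    | nil => exact ⟨[ψ], List.Sublist.refl _, by simp, h⟩
    | cons χ rest' =>
      by_cases hall : ∀ i < u.length, sat ψ (u.drop i)
      · exact ⟨[ψ], List.singleton_sublist.mpr (by simp), by simp, hall⟩
      · push_neg at hall
        have hex : ∃ i, i < u.length ∧ ¬ sat ψ (u.drop i) := by
          obtain ⟨i, hi, hns⟩ := hall; exact ⟨i, hi, hns⟩
        classical
        set i0 := Nat.find hex with hi0def
        obtain ⟨hi0len, hi0ns⟩ := Nat.find_spec hex
        have hrest : (nestG (χ :: rest')).sat (u.drop i0) :=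
          (h i0 hi0len).resolve_left hi0ns
        obtain ⟨sub', hsub', hlen', hsat'⟩ := ih (u.drop i0) hrest
        rcases Nat.eq_zero_or_pos i0 with h0 | hpos
        · refine ⟨sub', hsub'.cons ψ, ?_, ?_⟩
          · rw [h0] at hlen'; simpa using hlen'
          · rw [h0] at hsat'; simpa using hsat'
        · cases sub' with
          | nil => exact hsat'.elim
          | cons s sub'' =>
            refine ⟨ψ :: s :: sub'', hsub'.cons₂ ψ, ?_, ?_⟩
            · simp only [List.length_drop, List.length_cons] at hlen' ⊢
              omega
            · intro i hi
              by_cases hlt : i < i0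
              · have := Nat.find_min hex hlt
                push_neg at this
                exact Or.inl (this (by omega))
              · right
                have := nestG_suffix hsat' (i - i0)
                rw [List.drop_drop] at this
                have heq : i0 + (i - i0) = i := by omega
                rwa [heq] at this

end LTL

/-- dual extraction of a short nested `G`-formula. The subsequence
`ψ_{i₁}, …, ψ_{i_k}` (with `i₁ < ⋯ < i_k`) is expressed via `List.Sublist`. -/
theorem nestG_short {σ : Type} (ψs : List (LTL σ)) (u : List σ) (hu : u ≠ [])
    (h : (nestG ψs).sat u) :
    ∃ sub : List (LTL σ), sub.Sublist ψs ∧ sub.length ≤ u.length + 1 ∧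
      (nestG sub).sat u ∧
      ∀ w : List σ, w ≠ [] → (nestG sub).sat w → (nestG ψs).sat w := by
  obtain ⟨sub, hsub, hlen, hsat⟩ := LTL.nestG_extract ψs u h
  exact ⟨sub, hsub, hlen, hsat, fun w _ hw => LTL.nestG_mono hsub w hw⟩
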